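/- arXiv:2208.05656 — 2 statements merged into one kernel-verified Lean document; each statement's English description precedes it below -/
import Mathlib

section
/- Bicausal projection of controls: let π be a bicausal coupling between P, Q ∈ 𝒫_p(ℝ^T) and a = (a_t)_{t=1}^T a predictable control under X (a_t is ℱ_{t-1}^X-measurable, |a_t| ≤ L). Define b_t := E_π[a_t(X) | ℱ_T^Y]. Then b_t is ℱ_{t-1}^Y-measurable and |b_t| ≤ L; i.e., b is a predictable control under Y bounded by L. Moreover, if f(y,·) is convex for each y, then E_Q[f(Y, b(Y))] ≤ E_π[f(Y, a(X))]. -/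
/-!
Bicausality says that `E_π[1_A(X) | ℱ_T^Y] = E_π[1_A(X) | ℱ_t^Y]` for `A ∈ ℱ_t^X`; by linearity
and `L¹`-continuity of conditional expectation this extends to every integrable
`ℱ_t^X`-measurable function, in particular to the `ℱ_{t-1}^X`-measurable control `a_t`. So
`E_π[a_t(X) | ℱ_T^Y]` has an `ℱ_{t-1}^Y`-measurable version, which can be clipped to `[-L, L]`.

Disintegrating `π` along `Y` as `Q ⊗ κ`, we get `b(y) = ∫ a(x) κ(y, dx)` for `Q`-a.e. `y`, and
Jensen's inequality for the convex function `f(y, ·)` under each `κ(y)` integrates to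
`E_Q[f(Y, b(Y))] ≤ E_π[f(Y, a(X))]`.
-/

open MeasureTheory ProbabilityTheory Filter Set

noncomputable section

abbrev PathSp (T : ℕ) := Fin T → ℝ

/-- σ-algebra generated by the first `t` coordinates `X_1,…,X_t` on path space. -/
def FX (T t : ℕ) : MeasurableSpace (PathSp T) :=
  ⨆ i : Fin T, ⨆ _ : (i : ℕ) < t, MeasurableSpace.comap (fun x => x i) inferInstance

def prodX (T t : ℕ) : MeasurableSpace (PathSp T × PathSp T) := (FX T t).comap Prod.fst

def prodY (T t : ℕ) : MeasurableSpace (PathSp T × PathSp T) := (FX T t).comap Prod.snd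

def prodXY (T t : ℕ) : MeasurableSpace (PathSp T × PathSp T) := prodX T t ⊔ prodY T t

def IsCoupling {T : ℕ} (π : Measure (PathSp T × PathSp T)) (P Q : Measure (PathSp T)) : Prop :=
  π.map Prod.fst = P ∧ π.map Prod.snd = Q

/-- Causality of a coupling: conditionally on `X_1,…,X_t`, the variables `Y_1,…,Y_t`
are independent of `X_1,…,X_T`. -/
def Causal (T : ℕ) (π : Measure (PathSp T × PathSp T)) : Prop :=
  ∀ t ≤ T, ∀ A : Set (PathSp T), MeasurableSet[FX T t] A →
    (π[fun z => A.indicator (fun _ => (1:ℝ)) z.2 | prodX T T]) =ᵐ[π]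
    (π[fun z => A.indicator (fun _ => (1:ℝ)) z.2 | prodX T t])

def Bicausal (T : ℕ) (π : Measure (PathSp T × PathSp T)) : Prop :=
  Causal T π ∧ ∀ t ≤ T, ∀ A : Set (PathSp T), MeasurableSet[FX T t] A →
    (π[fun z => A.indicator (fun _ => (1:ℝ)) z.1 | prodY T T]) =ᵐ[π]
    (π[fun z => A.indicator (fun _ => (1:ℝ)) z.1 | prodY T t])

/-- `P` has a finite `p`-th moment. -/
def FiniteMoment {T : ℕ} (p : ℝ) (P : Measure (PathSp T)) : Prop :=
  ∀ t : Fin T, MemLp (fun x => x t) (ENNReal.ofReal p) P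

/-- The adapted Wasserstein distance of order `p`. -/
def AW (T : ℕ) (p : ℝ) (P Q : Measure (PathSp T)) : ℝ :=
  sInf { r | ∃ π : Measure (PathSp T × PathSp T), IsCoupling π P Q ∧ Bicausal T π ∧
    r = (∑ t : Fin T, ∫ z, |z.1 t - z.2 t| ^ p ∂π) ^ (1 / p) }

/-- The closed ball of radius `r` around `P` in the adapted Wasserstein distance,
within the set of probability measures with finite `p`-th moment. -/
def AWball (T : ℕ) (p : ℝ) (P : Measure (PathSp T)) (r : ℝ) : Set (Measure (PathSp T)) :=
  { Q | IsProbabilityMeasure Q ∧ FiniteMoment p Q ∧ AW T p P Q ≤ r }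

/-- Partial derivative `∂_{x_t} f`. -/
def pd {T : ℕ} (f : PathSp T → ℝ) (x : PathSp T) (t : Fin T) : ℝ :=
  fderiv ℝ f x (Pi.single t 1)


/-- Predictable controls bounded by `L`: `a_t` depends only on `x_1,…,x_{t-1}`
and `|a_t| ≤ L`. -/
def PredictableControl (T : ℕ) (L : ℝ) (a : Fin T → PathSp T → ℝ) : Prop :=
  ∀ t : Fin T, Measurable[FX T (t : ℕ)] (a t) ∧ ∀ x, |a t x| ≤ L

/-- Value `v(Q) = inf_{a ∈ 𝒜} E_Q[f(X, a(X))]` of the multiperiod stochastic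
optimization problem. -/
def cval (T : ℕ) (L : ℝ) (f : PathSp T → (Fin T → ℝ) → ℝ)
    (Q : Measure (PathSp T)) : ℝ :=
  sInf { v | ∃ a, PredictableControl T L a ∧ v = ∫ x, f x (fun t => a t x) ∂Q }

theorem condExp_ae_eq_of_forall_indicator {Ω : Type*} {m₁ m m' m0 : MeasurableSpace Ω}
    {μ : Measure Ω} [IsFiniteMeasure μ] (hm₁ : m₁ ≤ m0) (hm : m ≤ m0) (hm' : m' ≤ m0)
    (hind : ∀ s, MeasurableSet[m₁] s →
      μ[s.indicator (fun _ => (1 : ℝ)) | m] =ᵐ[μ] μ[s.indicator (fun _ => (1 : ℝ)) | m'])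
    {g : Ω → ℝ} (hg : Integrable g μ) (hgm : AEStronglyMeasurable[m₁] g μ) :
    μ[g | m] =ᵐ[μ] μ[g | m'] := by
  have := isFiniteMeasure_trim (μ := μ) hm
  have := isFiniteMeasure_trim (μ := μ) hm'
  refine MemLp.induction_stronglyMeasurable hm₁ ENNReal.one_ne_top
    (fun g => μ[g | m] =ᵐ[μ] μ[g | m']) ?_ ?_ ?_ ?_ (memLp_one_iff_integrable.mpr hg) hgm
  · intro c s hs _
    have hsmul : s.indicator (fun _ => c) = c • s.indicator (fun _ => (1 : ℝ)) := by
      ext x; by_cases hx : x ∈ s <;> simp [hx]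
    rw [hsmul]
    exact (condExp_smul c _ m).trans (((hind s hs).const_smul c).trans (condExp_smul c _ m').symm)
  · intro f g _ hf hg _ _ hfP hgP
    rw [memLp_one_iff_integrable] at hf hg
    exact (condExp_add hf hg m).trans ((hfP.add hgP).trans (condExp_add hf hg m').symm)
  · have hset : {f : lpMeas ℝ ℝ m₁ 1 μ | μ[(f : Ω → ℝ) | m] =ᵐ[μ] μ[(f : Ω → ℝ) | m']} =
        {f : lpMeas ℝ ℝ m₁ 1 μ |
          condExpL1CLM ℝ hm μ (f : Ω →₁[μ] ℝ) = condExpL1CLM ℝ hm' μ (f : Ω →₁[μ] ℝ)} := by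
      ext f
      have hf := L1.integrable_coeFn (f : Ω →₁[μ] ℝ)
      have h := condExp_ae_eq_condExpL1CLM hm hf
      have h' := condExp_ae_eq_condExpL1CLM hm' hf
      rw [Integrable.toL1_coeFn] at h h'
      simp only [mem_ofPred_eq, Lp.ext_iff]
      exact ⟨fun H => (h.symm.trans H).trans h', fun H => (h.trans H).trans h'.symm⟩
    rw [hset]
    exact isClosed_eq ((condExpL1CLM ℝ hm μ).continuous.comp continuous_subtype_val)
      ((condExpL1CLM ℝ hm' μ).continuous.comp continuous_subtype_val)
  · intro f g hfg _ hf
    exact (condExp_congr_ae hfg.symm).trans (hf.trans (condExp_congr_ae hfg))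

theorem condExp_pi_ae_eq {Ω ι : Type*} [Fintype ι] {m m0 : MeasurableSpace Ω} {μ : Measure Ω}
    {F : Ω → ι → ℝ} (hF : Integrable F μ) :
    μ[F | m] =ᵐ[μ] fun ω i => μ[fun ω => F ω i | m] ω :=
  (ae_all_iff.mpr fun i => (ContinuousLinearMap.proj i).comp_condExp_comm (m := m) hF).mono
    fun _ h => funext h

theorem exists_abs_le_comp_snd_ae_eq_condExp {α β : Type*} [MeasurableSpace α]
    (m : MeasurableSpace β) [MeasurableSpace β] (μ : Measure (α × β)) {g : α × β → ℝ}
    {L : ℝ} (hL : 0 ≤ L) (hg : ∀ z, |g z| ≤ L) :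
    ∃ b : β → ℝ, Measurable[m] b ∧ (∀ y, |b y| ≤ L) ∧
      (fun z => b z.2) =ᵐ[μ] μ[g | m.comap Prod.snd] := by
  obtain ⟨h, hh, hfac⟩ :=
    (stronglyMeasurable_condExp (m := m.comap Prod.snd) (f := g) (μ := μ)).exists_eq_measurable_comp
      (mY := m)
  have hbdd : ∀ᵐ z ∂μ, |μ[g | m.comap Prod.snd] z| ≤ L :=
    ae_bdd_abs_condExp_of_ae_bdd_abs (ae_of_all μ hg)
  refine ⟨fun y => max (-L) (min L (h y)), ?_, fun y => abs_le.mpr ⟨le_max_left _ _, ?_⟩, ?_⟩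
  · exact measurable_const.max (measurable_const.min hh.measurable)
  · exact max_le (by linarith) (min_le_left _ _)
  · filter_upwards [hbdd] with z hz
    rw [hfac, Function.comp_apply] at hz ⊢
    rw [min_eq_right (abs_le.mp hz).2, max_eq_right (abs_le.mp hz).1]

section Jensen

variable {α β E : Type*} [MeasurableSpace α] [mβ : MeasurableSpace β]
  [NormedAddCommGroup E] [NormedSpace ℝ E] [CompleteSpace E]

theorem integral_map_integral_le_integral_compProd {ν : Measure β} [IsFiniteMeasure ν]
    {κ : Kernel β α} [IsMarkovKernel κ] {A : α → E} {φ : β → E → ℝ}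
    (hconv : ∀ y, ConvexOn ℝ univ (φ y)) (hcont : ∀ y, Continuous (φ y))
    (hA : ∀ᵐ y ∂ν, Integrable A (κ y))
    (hint : Integrable (fun p : β × α => φ p.1 (A p.2)) (ν ⊗ₘ κ))
    (hint' : Integrable (fun y => φ y (∫ x, A x ∂κ y)) ν) :
    ∫ y, φ y (∫ x, A x ∂κ y) ∂ν ≤ ∫ p, φ p.1 (A p.2) ∂(ν ⊗ₘ κ) := by
  rw [Measure.integral_compProd hint]
  have hint_fibre := ((Measure.integrable_compProd_iff hint.aestronglyMeasurable).mp hint).1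
  refine integral_mono_ae hint' hint.integral_compProd ?_
  filter_upwards [hA, hint_fibre] with y hAy hy
  exact (hconv y).map_integral_le (hcont y).continuousOn isClosed_univ
    (ae_of_all _ fun _ => mem_univ _) hAy hy

theorem integral_map_condExp_snd_le [StandardBorelSpace α] [Nonempty α]
    [MeasurableSpace E] [BorelSpace E]
    (μ : Measure (α × β)) [IsFiniteMeasure μ] {A : α → E} (hA : StronglyMeasurable A)
    (hAint : Integrable (fun z => A z.1) μ) {B : β → E}
    (hAB : (fun z => B z.2) =ᵐ[μ] μ[fun z => A z.1 | mβ.comap Prod.snd])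
    {φ : β → E → ℝ} (hconv : ∀ y, ConvexOn ℝ univ (φ y)) (hcont : ∀ y, Continuous (φ y))
    (hφ : Measurable (Function.uncurry φ))
    (hint : Integrable (fun z => φ z.2 (A z.1)) μ)
    (hintB : Integrable (fun z => φ z.2 (B z.2)) μ) :
    ∫ z, φ z.2 (B z.2) ∂μ ≤ ∫ z, φ z.2 (A z.1) ∂μ := by
  set κ := condDistrib Prod.fst Prod.snd μ
  have hκ : (fun z => B z.2) =ᵐ[μ] fun z => ∫ x, A x ∂κ z.2 :=
    hAB.trans (condExp_ae_eq_integral_condDistrib measurable_snd measurable_fst.aemeasurable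
      hA hAint)
  have hdisint : μ.map Prod.snd ⊗ₘ κ = μ.map Prod.swap :=
    compProd_map_condDistrib measurable_fst.aemeasurable
  have hφκ : Measurable fun y => φ y (∫ x, A x ∂κ y) :=
    hφ.comp (measurable_id.prodMk (hA.integral_kernel (κ := κ)).measurable)
  have hφA : Measurable fun p : β × α => φ p.1 (A p.2) :=
    hφ.comp (measurable_fst.prodMk (hA.measurable.comp measurable_snd))
  have hφBκ : (fun z => φ z.2 (B z.2)) =ᵐ[μ] fun z => φ z.2 (∫ x, A x ∂κ z.2) := by
    filter_upwards [hκ] with z hz; rw [hz]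
  have hAint' : Integrable (fun p : β × α => A p.2) (μ.map Prod.snd ⊗ₘ κ) := by
    rw [hdisint]
    exact (integrable_map_measure (hA.comp_measurable measurable_snd).aestronglyMeasurable
      measurable_swap.aemeasurable).mpr hAint
  calc ∫ z, φ z.2 (B z.2) ∂μ = ∫ z, φ z.2 (∫ x, A x ∂κ z.2) ∂μ := integral_congr_ae hφBκ
    _ = ∫ y, φ y (∫ x, A x ∂κ y) ∂(μ.map Prod.snd) :=
        (integral_map measurable_snd.aemeasurable hφκ.aestronglyMeasurable).symm
    _ ≤ ∫ p, φ p.1 (A p.2) ∂(μ.map Prod.snd ⊗ₘ κ) := by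
        refine integral_map_integral_le_integral_compProd hconv hcont ?_ ?_ ?_
        · exact ((Measure.integrable_compProd_iff hAint'.aestronglyMeasurable).mp hAint').1
        · rw [hdisint]
          exact (integrable_map_measure hφA.aestronglyMeasurable
            measurable_swap.aemeasurable).mpr hint
        · exact (integrable_map_measure hφκ.aestronglyMeasurable
            measurable_snd.aemeasurable).mpr (hintB.congr hφBκ)
    _ = ∫ z, φ z.2 (A z.1) ∂μ := by
        rw [hdisint, integral_map measurable_swap.aemeasurable hφA.aestronglyMeasurable]; rfl

end Jensen

theorem FX_le (T t : ℕ) : FX T t ≤ MeasurableSpace.pi :=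
  iSup₂_le fun i _ => (measurable_pi_apply i).comap_le

theorem FX_self (T : ℕ) : FX T T = MeasurableSpace.pi :=
  le_antisymm (FX_le T T) (iSup_le fun i => le_iSup₂_of_le i i.isLt le_rfl)

theorem prodX_le (T t : ℕ) : prodX T t ≤ (inferInstance : MeasurableSpace (PathSp T × PathSp T)) :=
  (MeasurableSpace.comap_mono (FX_le T t)).trans measurable_fst.comap_le

theorem prodY_le (T t : ℕ) : prodY T t ≤ (inferInstance : MeasurableSpace (PathSp T × PathSp T)) :=
  (MeasurableSpace.comap_mono (FX_le T t)).trans measurable_snd.comap_le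

theorem Bicausal.condExp_prodY_ae_eq {T : ℕ} {π : Measure (PathSp T × PathSp T)}
    [IsFiniteMeasure π] (hbc : Bicausal T π) {t : ℕ} (ht : t ≤ T) {g : PathSp T → ℝ}
    (hg : StronglyMeasurable[FX T t] g) (hint : Integrable (fun z => g z.1) π) :
    π[fun z => g z.1 | prodY T T] =ᵐ[π] π[fun z => g z.1 | prodY T t] := by
  refine condExp_ae_eq_of_forall_indicator (prodX_le T t) (prodY_le T T) (prodY_le T t) ?_ hint
    (hg.comp_measurable (comap_measurable Prod.fst)).aestronglyMeasurable
  rintro _ ⟨A, hA, rfl⟩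
  exact hbc.2 t ht A hA

theorem PredictableControl.measurable {T : ℕ} {L : ℝ} {a : Fin T → PathSp T → ℝ}
    (ha : PredictableControl T L a) (t : Fin T) : Measurable (a t) :=
  (ha t).1.mono (FX_le T t) le_rfl

theorem PredictableControl.integrable_comp_fst {T : ℕ} {L : ℝ} {a : Fin T → PathSp T → ℝ}
    (ha : PredictableControl T L a) {α : Type*} [MeasurableSpace α]
    (μ : Measure (PathSp T × α)) [IsFiniteMeasure μ] (t : Fin T) :
    Integrable (fun z => a t z.1) μ :=
  (integrable_const L).mono' ((ha.measurable t).comp measurable_fst).aestronglyMeasurable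
    (ae_of_all _ fun z => (ha t).2 z.1)

theorem Bicausal.exists_predictableControl_ae_eq_condExp {T : ℕ} {L : ℝ}
    {π : Measure (PathSp T × PathSp T)} [IsFiniteMeasure π] (hbc : Bicausal T π)
    {a : Fin T → PathSp T → ℝ} (ha : PredictableControl T L a) :
    ∃ b : Fin T → PathSp T → ℝ, PredictableControl T L b ∧ ∀ t : Fin T,
      (fun z : PathSp T × PathSp T => b t z.2) =ᵐ[π] π[fun z => a t z.1 | prodY T T] := by
  choose b hbm hbL hbπ using fun t : Fin T =>
    exists_abs_le_comp_snd_ae_eq_condExp (FX T t) π ((abs_nonneg _).trans ((ha t).2 0))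
      (fun z => (ha t).2 z.1)
  refine ⟨b, fun t => ⟨hbm t, hbL t⟩, fun t => (hbπ t).trans ?_⟩
  exact (hbc.condExp_prodY_ae_eq t.isLt.le (ha t).1.stronglyMeasurable
    (ha.integrable_comp_fst π t)).symm

theorem bicausal_control_projection_general
    (T : ℕ) (L : ℝ)
    (P Q : Measure (PathSp T))
    (π : Measure (PathSp T × PathSp T)) [IsProbabilityMeasure π]
    (hπ : IsCoupling π P Q) (hbc : Bicausal T π)
    (a : Fin T → PathSp T → ℝ) (ha : PredictableControl T L a)
    (f : PathSp T → (Fin T → ℝ) → ℝ)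
    (hconv : ∀ y, ConvexOn ℝ Set.univ (f y))
    (hfcont : Continuous fun z : PathSp T × (Fin T → ℝ) => f z.1 z.2)
    (hint1 : Integrable (fun z => f z.2 (fun t => a t z.1)) π)
    (hint2 : ∀ b : Fin T → PathSp T → ℝ, PredictableControl T L b →
      Integrable (fun y => f y (fun t => b t y)) Q) :
    ∃ b : Fin T → PathSp T → ℝ, PredictableControl T L b ∧
      (∀ t : Fin T,
        (fun z : PathSp T × PathSp T => b t z.2) =ᵐ[π]
          π[fun z : PathSp T × PathSp T => a t z.1 | prodY T T]) ∧
      (∫ y, f y (fun t => b t y) ∂Q) ≤ ∫ z, f z.2 (fun t => a t z.1) ∂π := by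
  obtain ⟨b, hb, hproj⟩ := hbc.exists_predictableControl_ae_eq_condExp ha
  refine ⟨b, hb, hproj, ?_⟩
  have haint := integrable_pi_iff.mpr (ha.integrable_comp_fst π)
  have hvec : (fun z : PathSp T × PathSp T => fun t => b t z.2) =ᵐ[π]
      π[fun z : PathSp T × PathSp T => fun t => a t z.1 | MeasurableSpace.pi.comap Prod.snd] := by
    filter_upwards [condExp_pi_ae_eq haint, ae_all_iff.mpr hproj] with z hcondExp hcoord
    rw [hcondExp]; funext t; rw [hcoord t, prodY, FX_self]
  have hfb : Measurable fun y => f y (fun t => b t y) :=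
    hfcont.measurable.comp (measurable_id.prodMk (measurable_pi_lambda _ hb.measurable))
  have hintb := hint2 b hb
  rw [← hπ.2, integrable_map_measure hfb.aestronglyMeasurable measurable_snd.aemeasurable]
    at hintb
  rw [← hπ.2, integral_map measurable_snd.aemeasurable hfb.aestronglyMeasurable]
  exact integral_map_condExp_snd_le π (A := fun x t => a t x) (B := fun y t => b t y)
    (measurable_pi_lambda _ ha.measurable).stronglyMeasurable haint hvec hconv
    (fun y => hfcont.comp (Continuous.prodMk_right y)) hfcont.measurable hint1 hintb

/-- bicausal projection of controls: for a bicausal coupling π and a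
predictable control a under X, b_t := E_π[a_t(X)|ℱ_T^Y] is ℱ_{t-1}^Y-measurable and
bounded by L (i.e. a predictable control under Y), and if f(y,·) is convex then
E_Q[f(Y,b(Y))] ≤ E_π[f(Y,a(X))]. -/
theorem bicausal_control_projection
    (T : ℕ) (p L : ℝ) (hp : 1 < p) (hL : 0 < L)
    (P Q : Measure (PathSp T)) [IsProbabilityMeasure P] [IsProbabilityMeasure Q]
    (hPm : FiniteMoment p P) (hQm : FiniteMoment p Q)
    (π : Measure (PathSp T × PathSp T)) [IsProbabilityMeasure π]
    (hπ : IsCoupling π P Q) (hbc : Bicausal T π)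
    (a : Fin T → PathSp T → ℝ) (ha : PredictableControl T L a)
    (f : PathSp T → (Fin T → ℝ) → ℝ)
    (hconv : ∀ y, ConvexOn ℝ Set.univ (f y))
    (hfcont : Continuous fun z : PathSp T × (Fin T → ℝ) => f z.1 z.2)
    (hint1 : Integrable (fun z => f z.2 (fun t => a t z.1)) π)
    (hint2 : ∀ b : Fin T → PathSp T → ℝ, PredictableControl T L b →
      Integrable (fun y => f y (fun t => b t y)) Q) :
    ∃ b : Fin T → PathSp T → ℝ, PredictableControl T L b ∧
      (∀ t : Fin T,
        (fun z : PathSp T × PathSp T => b t z.2) =ᵐ[π]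
          π[fun z : PathSp T × PathSp T => a t z.1 | prodY T T]) ∧
      (∫ y, f y (fun t => b t y) ∂Q) ≤ ∫ z, f z.2 (fun t => a t z.1) ∂π :=
  bicausal_control_projection_general T L P Q π hπ hbc a ha f hconv hfcont hint1 hint2

end
end

section
/- Adapted Wasserstein bound for adapted additive perturbations: let Z = (Z_t)_{t=1}^T with Z_t ℱ_t^X-measurable and ∑_{t=1}^T E_P[|Z_t|^p] ≤ 1, and for r > 0 let Q^r be the law of X + rZ under P. Then for every n ∈ ℕ there exists Q^{r,n} ∈ 𝒫_p(ℝ^T) with 𝒜𝒲_p(P, Q^{r,n}) ≤ r + T/n and 𝒲_p(Q^{r,n}, Q^r) ≤ T^{1/p}/n, where 𝒲_p is the ordinary Wasserstein distance. In particular, for any ε > 0, Q^{r,n} ∈ B_{r+ε}(P) for n large enough. -/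
open MeasureTheory ProbabilityTheory Filter Set

noncomputable section

/-- Ordinary Wasserstein distance of order p on path space. -/
def Wp (T : ℕ) (p : ℝ) (P Q : Measure (PathSp T)) : ℝ :=
  sInf { r | ∃ π : Measure (PathSp T × PathSp T), IsCoupling π P Q ∧
    r = (∑ t : Fin T, ∫ z, |z.1 t - z.2 t| ^ p ∂π) ^ (1 / p) }

/-!
Fix `δ > 0`. The modification `Y^δ_t = φ_δ(X_t + r Z_t) + ψ_δ(X_t)` keeps the `δ`-cell of
`X_t + r Z_t` and stores `X_t` inside it, so `|Y^δ_t - (X_t + r Z_t)| < δ` and `X_t` is a Borel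
function of `Y^δ_t`. Hence `Y^δ` is a nonanticipative function of `X` and vice versa, so the graph
coupling `(X, Y^δ)` is bicausal. By Minkowski's inequality in `ℓᵖ(Lᵖ(P))` its cost is at most
`r + δ T^{1/p}`, while the coupling `(Y^δ, X + rZ)` costs at most `δ T^{1/p}`. Take `δ = 1/n`.
-/

section MixedNorm

variable {α ι : Type*} [MeasurableSpace α] {μ : Measure α} {p : ℝ}

lemma integral_abs_rpow_eq_lpNorm_rpow (hp : 0 < p) {f : α → ℝ}
    (hf : AEStronglyMeasurable f μ) :
    ∫ x, |f x| ^ p ∂μ = lpNorm f (ENNReal.ofReal p) μ ^ p := by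
  rw [lpNorm_eq_integral_norm_rpow_toReal (by simpa using hp) ENNReal.ofReal_ne_top hf,
    ENNReal.toReal_ofReal hp.le, Real.rpow_inv_rpow (integral_nonneg fun _ => by positivity)
    hp.ne']
  simp only [Real.norm_eq_abs]

lemma lpNorm_le_mul_lpNorm_add [IsProbabilityMeasure μ] (hp : 1 ≤ p) {u v : α → ℝ} {a c : ℝ}
    (ha : 0 ≤ a) (hc : 0 ≤ c) (hv : MemLp v (ENNReal.ofReal p) μ)
    (h : ∀ x, |u x| ≤ a * |v x| + c) :
    lpNorm u (ENNReal.ofReal p) μ ≤ a * lpNorm v (ENNReal.ofReal p) μ + c := by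
  have hp' : 1 ≤ ENNReal.ofReal p := by simpa using hp
  calc lpNorm u (ENNReal.ofReal p) μ
      ≤ lpNorm (fun x => a * |v x| + c) (ENNReal.ofReal p) μ :=
        lpNorm_mono_real ((hv.abs.const_mul a).add (memLp_const c)) fun x => h x
    _ ≤ lpNorm (fun x => a * |v x|) (ENNReal.ofReal p) μ
          + lpNorm (fun _ => c) (ENNReal.ofReal p) μ :=
        lpNorm_add_le (hv.abs.const_mul a) hp'
    _ = a * lpNorm v (ENNReal.ofReal p) μ + c := by
      rw [show (fun x => a * |v x|) = a • fun x => |v x| from rfl, lpNorm_const_smul,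
        lpNorm_fun_abs hv.1, lpNorm_const (by positivity) (IsProbabilityMeasure.ne_zero μ)]
      simp [abs_of_nonneg ha, abs_of_nonneg hc]

/-- Minkowski's inequality in the mixed norm `(∑ᵢ ‖·‖ₚᵖ)^(1/p)` of `ℓᵖ(ι; Lᵖ(μ))`. -/
lemma rpow_sum_integral_le [Fintype ι] [IsProbabilityMeasure μ] (hp : 1 ≤ p)
    {u v : ι → α → ℝ} {a c : ℝ} (ha : 0 ≤ a) (hc : 0 ≤ c)
    (hu : ∀ i, AEStronglyMeasurable (u i) μ) (hv : ∀ i, MemLp (v i) (ENNReal.ofReal p) μ)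
    (h : ∀ i x, |u i x| ≤ a * |v i x| + c) :
    (∑ i, ∫ x, |u i x| ^ p ∂μ) ^ (1 / p) ≤
      a * (∑ i, ∫ x, |v i x| ^ p ∂μ) ^ (1 / p) + c * (Fintype.card ι : ℝ) ^ (1 / p) := by
  have hp0 : 0 < p := zero_lt_one.trans_le hp
  simp only [integral_abs_rpow_eq_lpNorm_rpow hp0 (hu _),
    integral_abs_rpow_eq_lpNorm_rpow hp0 (hv _).1]
  set nv := fun i => lpNorm (v i) (ENNReal.ofReal p) μ
  have hnv : ∀ i, 0 ≤ nv i := fun i => lpNorm_nonneg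
  have hroot : ∀ x : ℝ, 0 ≤ x → (x ^ p) ^ (1 / p) = x := fun x hx => by
    rw [← Real.rpow_mul hx, mul_one_div_cancel hp0.ne', Real.rpow_one]
  have hscale : (∑ i, (a * nv i) ^ p) ^ (1 / p) = a * (∑ i, nv i ^ p) ^ (1 / p) := by
    rw [Finset.sum_congr rfl fun i _ => Real.mul_rpow ha (hnv i), ← Finset.mul_sum,
      Real.mul_rpow (by positivity) (Finset.sum_nonneg fun i _ => Real.rpow_nonneg (hnv i) _),
      hroot a ha]
  have hconst : (∑ _i : ι, c ^ p) ^ (1 / p) = c * (Fintype.card ι : ℝ) ^ (1 / p) := by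
    rw [Finset.sum_const, nsmul_eq_mul, Real.mul_rpow (by positivity) (by positivity),
      hroot c hc, Finset.card_univ, mul_comm]
  calc (∑ i, lpNorm (u i) (ENNReal.ofReal p) μ ^ p) ^ (1 / p)
      ≤ (∑ i, (a * nv i + c) ^ p) ^ (1 / p) := by
        refine Real.rpow_le_rpow (Finset.sum_nonneg fun i _ => Real.rpow_nonneg lpNorm_nonneg _)
          (Finset.sum_le_sum fun i _ => Real.rpow_le_rpow lpNorm_nonneg ?_ hp0.le) (by positivity)
        exact lpNorm_le_mul_lpNorm_add hp ha hc (hv i) (h i)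
    _ ≤ (∑ i, (a * nv i) ^ p) ^ (1 / p) + (∑ _i : ι, c ^ p) ^ (1 / p) :=
        Real.Lp_add_le_of_nonneg _ hp (fun i _ => mul_nonneg ha (hnv i)) fun _ _ => hc
    _ = _ := by rw [hscale, hconst]

end MixedNorm

section Filtration

variable {T : ℕ}

lemma comap_apply_le_FX {t : ℕ} {i : Fin T} (hi : (i : ℕ) < t) :
    MeasurableSpace.comap (fun x : PathSp T => x i) inferInstance ≤ FX T t :=
  le_iSup₂_of_le (f := fun (i : Fin T) (_ : (i : ℕ) < t) => _) i hi le_rfl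

lemma FX_mono {s t : ℕ} (h : s ≤ t) : FX T s ≤ FX T t :=
  iSup₂_le fun _ hi => comap_apply_le_FX (hi.trans_le h)

lemma FX_le_pi (t : ℕ) : FX T t ≤ MeasurableSpace.pi :=
  iSup₂_le fun i _ => (measurable_pi_apply i).comap_le

lemma measurable_apply_FX {t : ℕ} {i : Fin T} (hi : (i : ℕ) < t) :
    Measurable[FX T t] fun x : PathSp T => x i :=
  measurable_iff_comap_le.2 (comap_apply_le_FX hi)

lemma measurable_to_FX {α : Type*} {mα : MeasurableSpace α} {t : ℕ} {f : α → PathSp T}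
    (h : ∀ i : Fin T, (i : ℕ) < t → Measurable fun x => f x i) :
    Measurable[mα, FX T t] f := by
  rw [measurable_iff_comap_le, FX]
  simp only [MeasurableSpace.comap_iSup, MeasurableSpace.comap_comp]
  exact iSup₂_le fun i hi => measurable_iff_comap_le.1 (h i hi)

/-- Output coordinate `i : Fin T` depends only on the input coordinates `0, …, i`; since
`FX T t` is generated by the first `t` coordinates, this is `FX T (i + 1)`. -/
def Nonanticipative (T : ℕ) (f : PathSp T → PathSp T) : Prop :=
  ∀ i : Fin T, Measurable[FX T ((i : ℕ) + 1)] fun x => f x i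

lemma Nonanticipative.measurable_FX {f : PathSp T → PathSp T} (hf : Nonanticipative T f)
    (t : ℕ) : Measurable[FX T t, FX T t] f :=
  measurable_to_FX fun i hi => (hf i).mono (FX_mono hi) le_rfl

lemma Nonanticipative.measurable {f : PathSp T → PathSp T} (hf : Nonanticipative T f) :
    Measurable f :=
  measurable_pi_iff.2 fun i => (hf i).mono (FX_le_pi _) le_rfl

end Filtration

section Causality

variable {T : ℕ}

/-- Both sides are a.e. `h` itself, which is measurable for the smaller σ-algebra. -/
lemma condExp_comap_FX_eq_of_ae_eq {Ω : Type*} [MeasurableSpace Ω] {μ : Measure Ω}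
    [IsFiniteMeasure μ] {k : Ω → PathSp T} (hk : Measurable k) {s t : ℕ} (hts : t ≤ s)
    {B : Set (PathSp T)} (hB : MeasurableSet[FX T t] B) {h : Ω → ℝ}
    (hh : h =ᵐ[μ] fun ω => B.indicator (fun _ => (1 : ℝ)) (k ω)) :
    μ[h | (FX T s).comap k] =ᵐ[μ] μ[h | (FX T t).comap k] := by
  set g := fun ω => B.indicator (fun _ => (1 : ℝ)) (k ω)
  have hle : ∀ u, (FX T u).comap k ≤ ‹MeasurableSpace Ω› := fun u =>
    (MeasurableSpace.comap_mono (FX_le_pi u)).trans hk.comap_le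
  have hg : StronglyMeasurable[(FX T t).comap k] g :=
    ((measurable_const.indicator hB).comp (Measurable.of_comap_le le_rfl)).stronglyMeasurable
  have hgi : Integrable g μ :=
    (integrable_const (1 : ℝ)).indicator (hk (FX_le_pi t B hB)) |>.congr <| .of_forall fun _ => rfl
  calc μ[h | (FX T s).comap k] =ᵐ[μ] μ[g | (FX T s).comap k] := condExp_congr_ae hh
    _ = g := condExp_of_stronglyMeasurable (hle s)
        (hg.mono (MeasurableSpace.comap_mono (FX_mono hts))) hgi
    _ = μ[g | (FX T t).comap k] := (condExp_of_stronglyMeasurable (hle t) hg hgi).symm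
    _ =ᵐ[μ] μ[h | (FX T t).comap k] := condExp_congr_ae hh.symm

lemma causal_of_ae_snd_eq {π : Measure (PathSp T × PathSp T)} [IsFiniteMeasure π]
    {f : PathSp T → PathSp T} (hf : Nonanticipative T f) (hπ : ∀ᵐ z ∂π, z.2 = f z.1) :
    Causal T π := fun t ht A hA =>
  condExp_comap_FX_eq_of_ae_eq measurable_fst ht (hf.measurable_FX t hA) <| by
    filter_upwards [hπ] with z hz
    rw [hz]
    rfl

lemma bicausal_of_ae_eq {π : Measure (PathSp T × PathSp T)} [IsFiniteMeasure π]
    {f g : PathSp T → PathSp T} (hf : Nonanticipative T f) (hg : Nonanticipative T g)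
    (hπf : ∀ᵐ z ∂π, z.2 = f z.1) (hπg : ∀ᵐ z ∂π, z.1 = g z.2) : Bicausal T π :=
  ⟨causal_of_ae_snd_eq hf hπf, fun t ht A hA =>
    condExp_comap_FX_eq_of_ae_eq measurable_snd ht (hg.measurable_FX t hA) <| by
      filter_upwards [hπg] with z hz
      rw [hz]
      rfl⟩

lemma bicausal_map_graph {μ : Measure (PathSp T)} [IsFiniteMeasure μ] {f g : PathSp T → PathSp T}
    (hf : Nonanticipative T f) (hg : Nonanticipative T g) (hgf : Function.LeftInverse g f) :
    Bicausal T (μ.map fun x => (x, f x)) := by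
  have hgraph : Measurable fun x => (x, f x) := measurable_id.prodMk hf.measurable
  have hπf : ∀ᵐ z ∂(μ.map fun x => (x, f x)), z.2 = f z.1 :=
    (ae_map_iff hgraph.aemeasurable
      (measurableSet_eq_fun measurable_snd (hf.measurable.comp measurable_fst))).2
      (.of_forall fun _ => rfl)
  exact bicausal_of_ae_eq hf hg hπf (by filter_upwards [hπf] with z hz; rw [hz, hgf])

end Causality

section Cost

variable {T : ℕ} {p : ℝ}

def couplingCost (T : ℕ) (p : ℝ) (π : Measure (PathSp T × PathSp T)) : ℝ :=
  (∑ t : Fin T, ∫ z, |z.1 t - z.2 t| ^ p ∂π) ^ (1 / p)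

lemma couplingCost_nonneg (π : Measure (PathSp T × PathSp T)) : 0 ≤ couplingCost T p π :=
  Real.rpow_nonneg (Finset.sum_nonneg fun _ _ => integral_nonneg fun _ => by positivity) _

lemma AW_le_couplingCost {P Q : Measure (PathSp T)} {π : Measure (PathSp T × PathSp T)}
    (hπ : IsCoupling π P Q) (hb : Bicausal T π) : AW T p P Q ≤ couplingCost T p π :=
  csInf_le ⟨0, by rintro _ ⟨π', -, -, rfl⟩; exact couplingCost_nonneg π'⟩ ⟨π, hπ, hb, rfl⟩

lemma Wp_le_couplingCost {P Q : Measure (PathSp T)} {π : Measure (PathSp T × PathSp T)}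
    (hπ : IsCoupling π P Q) : Wp T p P Q ≤ couplingCost T p π :=
  csInf_le ⟨0, by rintro _ ⟨π', -, rfl⟩; exact couplingCost_nonneg π'⟩ ⟨π, hπ, rfl⟩

variable {α : Type*} [MeasurableSpace α] {μ : Measure α} {f g : α → PathSp T}

lemma isCoupling_map_prodMk (hf : Measurable f) (hg : Measurable g) :
    IsCoupling (μ.map fun x => (f x, g x)) (μ.map f) (μ.map g) :=
  ⟨by rw [Measure.map_map measurable_fst (hf.prodMk hg)]; rfl,
    by rw [Measure.map_map measurable_snd (hf.prodMk hg)]; rfl⟩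

lemma couplingCost_map_prodMk (hf : Measurable f) (hg : Measurable g) :
    couplingCost T p (μ.map fun x => (f x, g x)) =
      (∑ t : Fin T, ∫ x, |f x t - g x t| ^ p ∂μ) ^ (1 / p) := by
  unfold couplingCost
  congr 1
  refine Finset.sum_congr rfl fun t _ => integral_map (hf.prodMk hg).aemeasurable ?_
  exact ((measurable_fst.eval.sub measurable_snd.eval).abs.pow_const p).aestronglyMeasurable

end Cost

section Encoding

variable {δ : ℝ}

/-- `φ_δ(a) + ψ_δ(b)`, with `φ_δ` the `δ`-floor and `ψ_δ = δ • sigmoid` a Borel isomorphism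
`ℝ ≃ (0, δ)`: the `δ`-cell of `a` is kept and `b` is stored in the position inside the cell. -/
def cellEncode (δ a b : ℝ) : ℝ := δ * (⌊a / δ⌋ + Real.sigmoid b)

def cellDecode (δ c : ℝ) : ℝ := Real.log (Int.fract (c / δ) / (1 - Int.fract (c / δ)))

lemma fract_cellEncode_div (hδ : δ ≠ 0) (a b : ℝ) :
    Int.fract (cellEncode δ a b / δ) = Real.sigmoid b := by
  rw [cellEncode, mul_div_cancel_left₀ _ hδ, Int.fract_intCast_add,
    Int.fract_eq_self.2 ⟨(Real.sigmoid_pos b).le, Real.sigmoid_lt_one b⟩]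

lemma cellDecode_cellEncode (hδ : δ ≠ 0) (a b : ℝ) : cellDecode δ (cellEncode δ a b) = b := by
  rw [cellDecode, fract_cellEncode_div hδ, ← Real.sigmoid_neg, ← Real.sigmoid_mul_rexp_neg,
    div_mul_cancel_left₀ (Real.sigmoid_pos b).ne', ← Real.exp_neg, neg_neg, Real.log_exp]

lemma abs_cellEncode_sub_lt (hδ : 0 < δ) (a b : ℝ) : |cellEncode δ a b - a| < δ := by
  have hfloor : δ * ⌊a / δ⌋ ≤ a := (le_div_iff₀' hδ).1 (Int.floor_le _)
  have hceil : a < δ * ⌊a / δ⌋ + δ := by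
    have := (div_lt_iff₀' hδ).1 (Int.lt_floor_add_one (a / δ))
    linarith
  have hs := mul_pos hδ (Real.sigmoid_pos b)
  have hs' := mul_lt_of_lt_one_right hδ (Real.sigmoid_lt_one b)
  rw [cellEncode, mul_add, abs_sub_lt_iff]
  constructor <;> linarith

lemma measurable_cellEncode : Measurable (Function.uncurry (cellEncode δ)) := by
  unfold cellEncode
  fun_prop

lemma measurable_cellDecode : Measurable (cellDecode δ) := by
  unfold cellDecode
  fun_prop

end Encoding

section Perturbation

variable {T : ℕ} {p r δ : ℝ} {Z : Fin T → PathSp T → ℝ}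

/-- The bicausal modification `Y^δ` of `X + rZ`. -/
def perturbEncode (r δ : ℝ) (Z : Fin T → PathSp T → ℝ) (x : PathSp T) : PathSp T :=
  fun t => cellEncode δ (x t + r * Z t x) (x t)

def pathDecode (δ : ℝ) (y : PathSp T) : PathSp T := fun t => cellDecode δ (y t)

lemma nonanticipative_perturbEncode (hZ : ∀ t : Fin T, Measurable[FX T ((t : ℕ) + 1)] (Z t)) :
    Nonanticipative T (perturbEncode r δ Z) := by
  intro i
  have hx : Measurable[FX T ((i : ℕ) + 1)] fun x : PathSp T => x i :=
    measurable_apply_FX (Nat.lt_succ_self _)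
  have hpair : Measurable[FX T ((i : ℕ) + 1)] fun x => (x i + r * Z i x, x i) :=
    (hx.add ((hZ i).const_mul r)).prodMk hx
  have hY := (measurable_cellEncode (δ := δ)).comp hpair
  exact hY

lemma nonanticipative_pathDecode : Nonanticipative T (pathDecode δ) := fun _ =>
  measurable_cellDecode.comp (measurable_apply_FX (Nat.lt_succ_self _))

lemma pathDecode_perturbEncode (hδ : δ ≠ 0) :
    Function.LeftInverse (pathDecode δ) (perturbEncode r δ Z) := fun _ =>
  funext fun _ => cellDecode_cellEncode hδ _ _

lemma abs_perturbEncode_sub_lt (hδ : 0 < δ) (x : PathSp T) (t : Fin T) :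
    |perturbEncode r δ Z x t - (x t + r * Z t x)| < δ :=
  abs_cellEncode_sub_lt hδ _ _

lemma abs_sub_perturbEncode_le (hr : 0 ≤ r) (hδ : 0 < δ) (x : PathSp T) (t : Fin T) :
    |x t - perturbEncode r δ Z x t| ≤ r * |Z t x| + δ := by
  have h := abs_perturbEncode_sub_lt (r := r) (Z := Z) hδ x t
  rw [abs_sub_comm] at h
  calc |x t - perturbEncode r δ Z x t|
      = |-(r * Z t x) + (x t + r * Z t x - perturbEncode r δ Z x t)| := by congr 1; ring
    _ ≤ |-(r * Z t x)| + |x t + r * Z t x - perturbEncode r δ Z x t| := abs_add_le _ _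
    _ ≤ r * |Z t x| + δ := by
      rw [abs_neg, abs_mul, abs_of_nonneg hr]
      exact add_le_add_right h.le _

variable (hZ : ∀ t : Fin T, Measurable[FX T ((t : ℕ) + 1)] (Z t))
  {P : Measure (PathSp T)} [IsProbabilityMeasure P]
include hZ

lemma finiteMoment_map_perturbEncode (hPm : FiniteMoment p P) (hr : 0 ≤ r) (hδ : 0 < δ)
    (hZLp : ∀ t : Fin T, MemLp (Z t) (ENNReal.ofReal p) P) :
    FiniteMoment p (P.map (perturbEncode r δ Z)) := by
  intro t
  have hY := (nonanticipative_perturbEncode (r := r) (δ := δ) hZ).measurable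
  refine (memLp_map_measure_iff (measurable_pi_apply t).aestronglyMeasurable
    hY.aemeasurable).2 ?_
  refine ((hPm t).norm.add (((hZLp t).norm.const_mul r).add (memLp_const δ))).of_le
    hY.eval.aestronglyMeasurable (.of_forall fun x => ?_)
  have h := abs_sub_perturbEncode_le (Z := Z) hr hδ x t
  have h' := abs_sub_abs_le_abs_sub (perturbEncode r δ Z x t) (x t)
  rw [abs_sub_comm] at h'
  simp only [Pi.add_apply, Function.comp_apply, Real.norm_eq_abs]
  rw [abs_of_nonneg (by positivity : 0 ≤ |x t| + (r * |Z t x| + δ))]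
  linarith

lemma AW_map_perturbEncode_le (hp : 1 ≤ p) (hr : 0 ≤ r) (hδ : 0 < δ)
    (hZLp : ∀ t : Fin T, MemLp (Z t) (ENNReal.ofReal p) P)
    (hZp : ∑ t : Fin T, ∫ x, |Z t x| ^ p ∂P ≤ 1) :
    AW T p P (P.map (perturbEncode r δ Z)) ≤ r + δ * (T : ℝ) ^ (1 / p) := by
  have hY := (nonanticipative_perturbEncode (r := r) (δ := δ) hZ).measurable
  have hcoupling : IsCoupling (P.map fun x => (x, perturbEncode r δ Z x)) P
      (P.map (perturbEncode r δ Z)) := by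
    simpa using isCoupling_map_prodMk (μ := P) measurable_id hY
  have hZnorm : (∑ t : Fin T, ∫ x, |Z t x| ^ p ∂P) ^ (1 / p) ≤ 1 :=
    Real.rpow_le_one (Finset.sum_nonneg fun _ _ => integral_nonneg fun _ => by positivity) hZp
      (by positivity)
  calc AW T p P (P.map (perturbEncode r δ Z))
      ≤ couplingCost T p (P.map fun x => (x, perturbEncode r δ Z x)) :=
        AW_le_couplingCost hcoupling (bicausal_map_graph (nonanticipative_perturbEncode hZ)
          nonanticipative_pathDecode (pathDecode_perturbEncode hδ.ne'))
    _ = (∑ t : Fin T, ∫ x, |x t - perturbEncode r δ Z x t| ^ p ∂P) ^ (1 / p) :=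
        couplingCost_map_prodMk measurable_id hY
    _ ≤ r * (∑ t : Fin T, ∫ x, |Z t x| ^ p ∂P) ^ (1 / p) + δ * (T : ℝ) ^ (1 / p) := by
        simpa using rpow_sum_integral_le hp hr hδ.le
          (fun t => ((measurable_pi_apply t).sub hY.eval).aestronglyMeasurable) hZLp
          fun t x => abs_sub_perturbEncode_le hr hδ x t
    _ ≤ r + δ * (T : ℝ) ^ (1 / p) := by nlinarith

lemma Wp_map_perturbEncode_le (hp : 1 ≤ p) (hδ : 0 < δ) :
    Wp T p (P.map (perturbEncode r δ Z)) (P.map fun x t => x t + r * Z t x) ≤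
      δ * (T : ℝ) ^ (1 / p) := by
  have hY := (nonanticipative_perturbEncode (r := r) (δ := δ) hZ).measurable
  have hX : Measurable fun x : PathSp T => fun t => x t + r * Z t x :=
    measurable_pi_iff.2 fun t =>
      (measurable_pi_apply t).add (((hZ t).mono (FX_le_pi _) le_rfl).const_mul r)
  calc Wp T p (P.map (perturbEncode r δ Z)) (P.map fun x t => x t + r * Z t x)
      ≤ couplingCost T p (P.map fun x => (perturbEncode r δ Z x, fun t => x t + r * Z t x)) :=
        Wp_le_couplingCost (isCoupling_map_prodMk hY hX)
    _ = (∑ t : Fin T, ∫ x, |perturbEncode r δ Z x t - (x t + r * Z t x)| ^ p ∂P) ^ (1 / p) :=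
        couplingCost_map_prodMk hY hX
    _ ≤ δ * (T : ℝ) ^ (1 / p) := by
        simpa using rpow_sum_integral_le (ι := Fin T) (μ := P) (v := fun _ _ => (0 : ℝ)) hp
          le_rfl hδ.le (fun t => (hY.eval.sub hX.eval).aestronglyMeasurable) (fun _ => MemLp.zero)
          fun t x => by simpa using (abs_perturbEncode_sub_lt hδ x t).le

end Perturbation

lemma natCast_rpow_le_self {p : ℝ} (hp : 1 ≤ p) (T : ℕ) : (T : ℝ) ^ (1 / p) ≤ T := by
  rcases T.eq_zero_or_pos with rfl | hT
  · rw [Nat.cast_zero, Real.zero_rpow (one_div_pos.2 (zero_lt_one.trans_le hp)).ne']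
  · exact Real.rpow_le_self_of_one_le (by exact_mod_cast hT) ((div_le_one₀ (by linarith)).2 hp)

/-- adapted Wasserstein bound for adapted additive perturbations:
for Q^r the law of X + rZ, there are Q^{r,n} with 𝒜𝒲_p(P,Q^{r,n}) ≤ r + T/n and
𝒲_p(Q^{r,n}, Q^r) ≤ T^{1/p}/n; in particular Q^{r,n} ∈ B_{r+ε}(P) for n large. -/
theorem adapted_perturbation_AW_bound
    (T : ℕ) (p : ℝ) (hp : 1 < p)
    (P : Measure (PathSp T)) [IsProbabilityMeasure P] (hPm : FiniteMoment p P)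
    (Z : Fin T → PathSp T → ℝ)
    (hZmeas : ∀ t : Fin T, Measurable[FX T ((t : ℕ) + 1)] (Z t))
    (hZLp : ∀ t : Fin T, MemLp (Z t) (ENNReal.ofReal p) P)
    (hZp : ∑ t : Fin T, ∫ x, |Z t x| ^ p ∂P ≤ 1)
    (r : ℝ) (hr : 0 < r) :
    ∃ Qs : ℕ → Measure (PathSp T),
      (∀ n : ℕ, 0 < n →
        IsProbabilityMeasure (Qs n) ∧ FiniteMoment p (Qs n) ∧
        AW T p P (Qs n) ≤ r + T / n ∧
        Wp T p (Qs n) (P.map fun x => fun t => x t + r * Z t x) ≤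
          (T : ℝ) ^ (1 / p) / n) ∧
      ∀ ε > (0:ℝ), ∃ N : ℕ, ∀ n ≥ N, Qs n ∈ AWball T p P (r + ε) := by
  have hbounds : ∀ n : ℕ, 0 < n →
      IsProbabilityMeasure (P.map (perturbEncode r (1 / n) Z)) ∧
      FiniteMoment p (P.map (perturbEncode r (1 / n) Z)) ∧
      AW T p P (P.map (perturbEncode r (1 / n) Z)) ≤ r + T / n ∧
      Wp T p (P.map (perturbEncode r (1 / n) Z)) (P.map fun x t => x t + r * Z t x) ≤
        (T : ℝ) ^ (1 / p) / n := by
    intro n hn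
    have hδ : (0 : ℝ) < 1 / n := by positivity
    refine ⟨Measure.isProbabilityMeasure_map
        (nonanticipative_perturbEncode hZmeas).measurable.aemeasurable,
      finiteMoment_map_perturbEncode hZmeas hPm hr.le hδ hZLp, ?_, ?_⟩
    · calc AW T p P (P.map (perturbEncode r (1 / n) Z)) ≤ r + 1 / n * (T : ℝ) ^ (1 / p) :=
            AW_map_perturbEncode_le hZmeas hp.le hr.le hδ hZLp hZp
        _ ≤ r + 1 / n * T := by grw [natCast_rpow_le_self hp.le T]
        _ = r + T / n := by rw [one_div_mul_eq_div]
    · exact (Wp_map_perturbEncode_le hZmeas hp.le hδ).trans_eq (one_div_mul_eq_div _ _)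
  refine ⟨fun n => P.map (perturbEncode r (1 / n) Z), hbounds, fun ε hε => ?_⟩
  obtain ⟨N, hN⟩ := eventually_atTop.1 <| (eventually_gt_atTop 0).and <|
    (tendsto_const_div_atTop_nhds_zero_nat (T : ℝ)).eventually (eventually_le_nhds hε)
  refine ⟨N, fun n hn => ?_⟩
  obtain ⟨hprob, hmoment, hAW, -⟩ := hbounds n (hN n hn).1
  exact ⟨hprob, hmoment, hAW.trans (by linarith [(hN n hn).2])⟩

end
end
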